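/- arXiv:2306.01138 — 4 statements merged into one kernel-verified Lean document; each statement's English description precedes it below -/
import Mathlib

section
/- Let n ≥ 3, let B be the adjacency matrix of the book graph B_n = K_{1,n} □ K₂, and let D be the (2n+2)×(2n+2) matrix D = [[−(√n/2)·I, (−√n/2 + 1)·I],[(−√n/2 + 1)·I, −(√n/2)·I]] where I = I_{n+1}. Then the matrix C = B − D is symmetric, has eigenvalues 2√n (multiplicity 1), 0 (multiplicity n), √n (multiplicity n), and −√n (multiplicity 1); in particular C has nullity n and exactly one negative eigenvalue. -/
/-!
With `T = [[I, I], [I, -I]]` one has `T * [[P, Q], [Q, P]] = diag (P + Q, P - Q) * T` and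
`T * T = 2 I`, so `χ [[P, Q], [Q, P]] = χ (P + Q) * χ (P - Q)`. Here `C = [[P, Q], [Q, P]]` with
`P = A + (√n / 2) I` and `Q = (√n / 2) I`, so `χ C = χ (A + √n I) * χ A`. The star's adjacency matrix is `e lᵀ + l eᵀ` with `e ⊥ l`, `|e|² = 1`,
`|l|² = n`, so `χ A = X ^ (n - 1) * (X ^ 2 - n)` and
`χ C = X ^ n * (X - √n) ^ n * (X + √n) * (X - 2√n)`. Since `C` is symmetric, the multiplicity of an
eigenvalue of `C` is its multiplicity as a root of `χ C`.
-/

open Matrix Finset Module Polynomial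

namespace Matrix

section CommRing

variable {m R : Type*} [Fintype m] [DecidableEq m] [CommRing R]

theorem charpoly_fromBlocks_self [Invertible (2 : R)] (P Q : Matrix m m R) :
    (fromBlocks P Q Q P).charpoly = (P + Q).charpoly * (P - Q).charpoly := by
  set T : Matrix (m ⊕ m) (m ⊕ m) R := fromBlocks 1 1 1 (-1)
  have hT : T * ((⅟2 : R) • T) = 1 := by
    rw [mul_smul_comm, fromBlocks_multiply, ← fromBlocks_one, fromBlocks_smul]
    congr 1 <;> simp [← two_smul R, smul_smul]
  have hTM : T * fromBlocks P Q Q P = fromBlocks (P + Q) 0 0 (P - Q) * T := by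
    simp only [T, fromBlocks_multiply]
    congr 1 <;> simp only [Matrix.one_mul, Matrix.mul_one, Matrix.neg_mul, Matrix.mul_neg,
      add_zero, zero_add] <;> abel
  calc (fromBlocks P Q Q P).charpoly
      = ((⅟2 : R) • T * (fromBlocks (P + Q) 0 0 (P - Q) * T)).charpoly := by
        rw [← hTM, ← Matrix.mul_assoc, mul_eq_one_comm.mp hT, Matrix.one_mul]
    _ = (P + Q).charpoly * (P - Q).charpoly := by
        rw [charpoly_mul_comm, Matrix.mul_assoc, hT, Matrix.mul_one, charpoly_fromBlocks_zero₁₂]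

theorem charpoly_vecMulVec_add_vecMulVec [Nontrivial R] (u v : m → R) (hm : 2 ≤ Fintype.card m) :
    (vecMulVec u v + vecMulVec v u).charpoly = X ^ (Fintype.card m - 2) *
      (X ^ 2 - 2 * C (u ⬝ᵥ v) * X + C ((u ⬝ᵥ v) ^ 2 - (u ⬝ᵥ u) * (v ⬝ᵥ v))) := by
  have hWZ : vecMulVec u v + vecMulVec v u = of (fun i => ![u i, v i]) * of ![v, u] := by
    ext i j
    simp [mul_apply, Fin.sum_univ_two, vecMulVec_apply]
  have hZW : of ![v, u] * of (fun i => ![u i, v i]) = !![v ⬝ᵥ u, v ⬝ᵥ v; u ⬝ᵥ u, u ⬝ᵥ v] := by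
    ext i j
    fin_cases i <;> fin_cases j <;> rfl
  rw [hWZ, charpoly_mul_comm_of_le _ _ (by simpa using hm), hZW, charpoly_fin_two]
  simp [trace_fin_two, det_fin_two, dotProduct_comm v u]
  ring

theorem charpoly_star_adjacency [Nontrivial R] (n : ℕ) (hn : 1 ≤ n)
    (A : Matrix (Fin (n + 1)) (Fin (n + 1)) R)
    (hA : ∀ i j, A i j = if (i = 0 ∧ j ≠ 0) ∨ (j = 0 ∧ i ≠ 0) then 1 else 0) :
    A.charpoly = X ^ (n - 1) * (X ^ 2 - (n : R[X])) := by
  set e : Fin (n + 1) → R := Pi.single 0 1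
  set l : Fin (n + 1) → R := 1 - e
  have hA' : A = vecMulVec e l + vecMulVec l e := by
    ext i j
    rw [hA]
    by_cases hi : i = 0 <;> by_cases hj : j = 0 <;> simp [e, l, hi, hj, vecMulVec_apply]
  have hel : e ⬝ᵥ l = 0 := by simp [e, l, dotProduct_sub]
  have hee : e ⬝ᵥ e = 1 := by simp [e]
  have hll : l ⬝ᵥ l = n := by simp [e, l, dotProduct_sub, sub_dotProduct]
  rw [hA', charpoly_vecMulVec_add_vecMulVec e l (by simp; omega), hel, hee, hll]
  simp [sub_eq_add_neg]

theorem charpoly_fromBlocks_star_adjacency (n : ℕ) (hn : 1 ≤ n)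
    (A : Matrix (Fin (n + 1)) (Fin (n + 1)) ℝ)
    (hA : ∀ i j, A i j = if (i = 0 ∧ j ≠ 0) ∨ (j = 0 ∧ i ≠ 0) then 1 else 0)
    (x : ℝ) (hx : (n : ℝ) = x * x) :
    (fromBlocks (A + (x / 2) • 1) ((x / 2) • 1) ((x / 2) • 1) (A + (x / 2) • 1)).charpoly =
      X ^ n * (X - C x) ^ n * (X - C (-x)) * (X - C (2 * x)) := by
  have hsum : A + (x / 2) • 1 + (x / 2) • 1 = A - scalar _ (-x) := by
    rw [scalar_apply, ← smul_one_eq_diagonal]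
    module
  have hdiff : A + (x / 2) • 1 - (x / 2) • 1 = A := by abel
  have hfac : X ^ 2 - (n : ℝ[X]) = (X - C x) * (X - C (-x)) := by
    rw [← map_natCast C, hx, map_neg, map_mul]
    ring
  rw [charpoly_fromBlocks_self, hsum, hdiff, charpoly_sub_scalar,
    charpoly_star_adjacency n hn A hA, hfac]
  obtain ⟨k, rfl⟩ : ∃ k, n = k + 1 := ⟨n - 1, by omega⟩
  simp only [mul_comp, pow_comp, sub_comp, neg_comp, X_comp, C_comp, add_tsub_cancel_right,
    map_neg, map_mul, map_ofNat]
  ring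

end CommRing

section IsHermitian

variable {n 𝕜 : Type*} [Fintype n] [DecidableEq n] [RCLike 𝕜] {M : Matrix n n 𝕜}

theorem IsHermitian.card_eigenvalues_eq (hM : M.IsHermitian) (μ : ℝ) :
    #{i | hM.eigenvalues i = μ} = M.charpoly.roots.count (μ : 𝕜) := by
  rw [hM.roots_charpoly_eq_eigenvalues, Multiset.count_map, Finset.card_def, Finset.filter_val]
  simp [eq_comm]

theorem IsHermitian.eigenvalues_mem_roots_charpoly (hM : M.IsHermitian) (i : n) :
    (hM.eigenvalues i : 𝕜) ∈ M.charpoly.roots := by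
  rw [hM.roots_charpoly_eq_eigenvalues]
  exact Multiset.mem_map_of_mem _ (Finset.mem_univ_val i)

theorem IsHermitian.finrank_ker_mulVecLin (hM : M.IsHermitian) :
    finrank 𝕜 (LinearMap.ker M.mulVecLin) = #{i | hM.eigenvalues i = 0} := by
  have hrank := hM.rank_eq_card_non_zero_eigs
  simp only [Fintype.card_subtype, ne_eq] at hrank
  have hsplit := card_filter_add_card_filter_not (s := univ) (fun i => hM.eigenvalues i = 0)
  have hnullity := LinearMap.finrank_range_add_finrank_ker M.mulVecLin
  rw [← Matrix.rank, hrank, finrank_fintype_fun_eq_card, ← card_univ] at hnullity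
  omega

end IsHermitian

end Matrix

theorem stmt4 (n : ℕ) (hn : 3 ≤ n)
    (A : Matrix (Fin (n + 1)) (Fin (n + 1)) ℝ)
    (hAdef : ∀ i j, A i j =
      if (i = 0 ∧ j ≠ 0) ∨ (j = 0 ∧ i ≠ 0) then 1 else 0)
    (B D C : Matrix (Fin (n + 1) ⊕ Fin (n + 1)) (Fin (n + 1) ⊕ Fin (n + 1)) ℝ)
    (hB : B = Matrix.fromBlocks A 1 1 A)
    (hD : D = Matrix.fromBlocks
      ((-(Real.sqrt n / 2)) • 1) ((-(Real.sqrt n) / 2 + 1) • 1)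
      ((-(Real.sqrt n) / 2 + 1) • 1) ((-(Real.sqrt n / 2)) • 1))
    (hC : C = B - D) :
    ∃ hH : C.IsHermitian,
      (Finset.univ.filter (fun i => hH.eigenvalues i = 2 * Real.sqrt n)).card = 1 ∧
      (Finset.univ.filter (fun i => hH.eigenvalues i = 0)).card = n ∧
      (Finset.univ.filter (fun i => hH.eigenvalues i = Real.sqrt n)).card = n ∧
      (Finset.univ.filter (fun i => hH.eigenvalues i = -Real.sqrt n)).card = 1 ∧
      Module.finrank ℝ (LinearMap.ker C.mulVecLin) = n ∧
      (Finset.univ.filter (fun i => hH.eigenvalues i < 0)).card = 1 := by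
  set x := Real.sqrt n
  have hx : 0 < x := Real.sqrt_pos.mpr (by positivity)
  have hxx : (n : ℝ) = x * x := (Real.mul_self_sqrt n.cast_nonneg).symm
  have hblocks :
      C = fromBlocks (A + (x / 2) • 1) ((x / 2) • 1) ((x / 2) • 1) (A + (x / 2) • 1) := by
    rw [hC, hB, hD, sub_eq_add_neg, fromBlocks_neg, fromBlocks_add]
    congr 1 <;> module
  have hAsymm : A.IsHermitian := by
    ext i j
    simp only [conjTranspose_apply, star_trivial, hAdef, or_comm]
  have hdiag : (A + (x / 2) • (1 : Matrix (Fin (n + 1)) (Fin (n + 1)) ℝ)).IsHermitian :=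
    hAsymm.add (isHermitian_one.smul (.all _))
  have hH : C.IsHermitian := hblocks ▸ hdiag.fromBlocks (by simp) hdiag
  have hroots : C.charpoly.roots = n • {0} + n • {x} + {-x} + {2 * x} := by
    rw [hblocks, charpoly_fromBlocks_star_adjacency n (by omega) A hAdef x hxx,
      ← roots_multiset_prod_X_sub_C (n • {0} + n • {x} + {-x} + {2 * x})]
    simp [Multiset.map_nsmul, Multiset.prod_nsmul]
  have hcount (μ : ℝ) :
      #{i | hH.eigenvalues i = μ} = (n • {0} + n • {x} + {-x} + {2 * x} : Multiset ℝ).count μ := by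
    rw [hH.card_eigenvalues_eq, hroots]
    rfl
  have hneg : (univ.filter fun i => hH.eigenvalues i < 0) =
      univ.filter fun i => hH.eigenvalues i = -x := by
    refine filter_congr fun i _ => ?_
    have hi := hH.eigenvalues_mem_roots_charpoly i
    rw [hroots] at hi
    obtain h | h | h | h : hH.eigenvalues i = 0 ∨ hH.eigenvalues i = x ∨
        hH.eigenvalues i = -x ∨ hH.eigenvalues i = 2 * x := by
      simpa [Multiset.mem_nsmul, show n ≠ 0 by omega, or_assoc] using hi
    all_goals rw [h]; constructor <;> intro <;> linarith
  refine ⟨hH, ?_⟩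
  rw [hH.finrank_ker_mulVecLin, hneg]
  refine ⟨?_, ?_, ?_, ?_, ?_, ?_⟩ <;>
    · rw [hcount]
      simp only [Multiset.count_add, Multiset.count_nsmul, Multiset.count_singleton]
      grind
end

section
/- Let n ≥ 5 and let G_n = K(n,2) be the Kneser graph on 2-subsets of {1,...,n}. If S ⊆ V(G_n) is such that the induced subgraph on V(G_n) \ S has at least 4 connected components, then every such component is a single isolated vertex. -/
/-!
If `uv` is an edge of `K(n,2) - S`, every vertex `x` outside the component of `u` is disjoint from
neither `u` nor `v`, so `x = {a, b}` with `a ∈ u` and `b ∈ v`. These four cross pairs form two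
perfect matchings `{a₁b₁, a₂b₂}` and `{a₁b₂, a₂b₁}`, and two pairs from the same matching are equal
or disjoint, hence in the same component. So there are at most three components.
-/

namespace SimpleGraph

theorem card_connectedComponent_le_of_reachable {V β : Type*} [Finite β] {H : SimpleGraph V}
    (u : V) (c : V → β)
    (hc : ∀ x y, ¬ H.Reachable x u → ¬ H.Reachable y u → c x = c y → H.Reachable x y) :
    Nat.card H.ConnectedComponent ≤ Nat.card β + 1 := by
  classical
  let f (C : H.ConnectedComponent) : Option β := if H.Reachable C.out u then none else c C.out
  have hf : Function.Injective f := by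
    intro C D hCD
    rw [← C.out_eq, ← D.out_eq]
    refine ConnectedComponent.sound ?_
    by_cases hC : H.Reachable C.out u <;> by_cases hD : H.Reachable D.out u <;>
      simp only [f, hC, hD, if_true, if_false, reduceCtorEq, Option.some_inj] at hCD
    · exact hC.trans hD.symm
    · exact hc _ _ hC hD hCD
  simpa using Nat.card_le_card_of_injective f hf

end SimpleGraph

namespace Finset

variable {α : Type*}

theorem eq_pair_of_mem_of_card_eq_two [DecidableEq α] {s : Finset α} {a b : α} (hs : s.card = 2)
    (ha : a ∈ s) (hb : b ∈ s) (hab : a ≠ b) : s = {a, b} :=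
  (eq_of_subset_of_card_le (insert_subset ha (singleton_subset_iff.mpr hb))
    (by rw [hs, card_pair hab])).symm

theorem eq_iff_eq_iff_eq_of_card_eq_two {s : Finset α} (hs : s.card = 2) {x y z : α}
    (hx : x ∈ s) (hy : y ∈ s) (hz : z ∈ s) : x = y ↔ (x = z ↔ y = z) := by
  classical
  obtain ⟨p, q, hpq, rfl⟩ := card_eq_two.mp hs
  simp only [mem_insert, mem_singleton] at hx hy hz
  rcases hx with rfl | rfl <;> rcases hy with rfl | rfl <;> rcases hz with rfl | rfl <;>
    simp [hpq, hpq.symm]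

/-- `X = {a, b}` and `Y = {a', b'}` with `a, a' ∈ u` and `b, b' ∈ v`; the hypothesis `hXY` says that
`X` and `Y` lie in the same perfect matching of the cross pairs, i.e. `a = a' ↔ b = b'`. -/
theorem eq_or_disjoint_of_meets_both {u v X Y : Finset α} (hu : u.card = 2) (hv : v.card = 2)
    (huv : Disjoint u v) (hX : X.card = 2) (hY : Y.card = 2)
    (hXu : ¬ Disjoint X u) (hXv : ¬ Disjoint X v) (hYu : ¬ Disjoint Y u) (hYv : ¬ Disjoint Y v)
    {a₀ b₀ : α} (ha₀ : a₀ ∈ u) (hb₀ : b₀ ∈ v)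
    (hXY : (a₀ ∈ X ↔ b₀ ∈ X) = (a₀ ∈ Y ↔ b₀ ∈ Y)) : X = Y ∨ Disjoint X Y := by
  classical
  obtain ⟨a, haX, hau⟩ := not_disjoint_iff.mp hXu
  obtain ⟨b, hbX, hbv⟩ := not_disjoint_iff.mp hXv
  obtain ⟨a', haY, ha'u⟩ := not_disjoint_iff.mp hYu
  obtain ⟨b', hbY, hb'v⟩ := not_disjoint_iff.mp hYv
  have hne {x y : α} (hx : x ∈ u) (hy : y ∈ v) : x ≠ y := fun h => disjoint_left.mp huv hx (h ▸ hy)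
  rw [eq_pair_of_mem_of_card_eq_two hX haX hbX (hne hau hbv),
    eq_pair_of_mem_of_card_eq_two hY haY hbY (hne ha'u hb'v)] at hXY ⊢
  have ha := eq_iff_eq_iff_eq_of_card_eq_two hu hau ha'u ha₀
  have hb := eq_iff_eq_iff_eq_of_card_eq_two hv hbv hb'v hb₀
  simp only [mem_insert, mem_singleton, eq_iff_iff] at hXY
  by_cases haa' : a = a'
  · left
    rw [haa', hb.mpr (by grind)]
  · right
    have hbb' : b ≠ b' := by grind
    simp only [disjoint_insert_left, disjoint_insert_right, disjoint_singleton, mem_insert,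
      mem_singleton, not_or]
    exact ⟨⟨Ne.symm haa', hne ha'u hbv⟩, hne hau hb'v, hbb'⟩

end Finset

section Kneser

variable {α : Type*} {G : SimpleGraph {x : Finset α // x.card = 2}}
  {T : Set {x : Finset α // x.card = 2}}

theorem induce_adj_iff_disjoint (hG : ∀ u v, G.Adj u v ↔ Disjoint u.1 v.1) {x y : T} :
    (G.induce T).Adj x y ↔ Disjoint x.1.1 y.1.1 :=
  SimpleGraph.induce_adj.trans (hG x y)

theorem not_disjoint_of_not_reachable_induce (hG : ∀ u v, G.Adj u v ↔ Disjoint u.1 v.1)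
    {x u : T} (h : ¬ (G.induce T).Reachable x u) : ¬ Disjoint x.1.1 u.1.1 :=
  fun hd => h ((induce_adj_iff_disjoint hG).mpr hd).reachable

theorem card_connectedComponent_induce_le_three (hG : ∀ u v, G.Adj u v ↔ Disjoint u.1 v.1)
    {u v : T} (huv : (G.induce T).Adj u v) :
    Nat.card (G.induce T).ConnectedComponent ≤ 3 := by
  obtain ⟨a₀, ha₀⟩ := Finset.card_pos.mp (u.1.2.symm ▸ two_pos)
  obtain ⟨b₀, hb₀⟩ := Finset.card_pos.mp (v.1.2.symm ▸ two_pos)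
  have huv' : Disjoint u.1.1 v.1.1 := (induce_adj_iff_disjoint hG).mp huv
  have hc (x y : T) (hx : ¬ (G.induce T).Reachable x u) (hy : ¬ (G.induce T).Reachable y u)
      (hxy : (a₀ ∈ x.1.1 ↔ b₀ ∈ x.1.1) = (a₀ ∈ y.1.1 ↔ b₀ ∈ y.1.1)) :
      (G.induce T).Reachable x y := by
    have hx' : ¬ (G.induce T).Reachable x v := fun h => hx (h.trans huv.symm.reachable)
    have hy' : ¬ (G.induce T).Reachable y v := fun h => hy (h.trans huv.symm.reachable)
    rcases Finset.eq_or_disjoint_of_meets_both u.1.2 v.1.2 huv' x.1.2 y.1.2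
        (not_disjoint_of_not_reachable_induce hG hx) (not_disjoint_of_not_reachable_induce hG hx')
        (not_disjoint_of_not_reachable_induce hG hy) (not_disjoint_of_not_reachable_induce hG hy')
        ha₀ hb₀ hxy with hxy | hxy
    · rw [Subtype.ext (Subtype.ext hxy)]
    · exact ((induce_adj_iff_disjoint hG).mpr hxy).reachable
  simpa using SimpleGraph.card_connectedComponent_le_of_reachable u _ hc

end Kneser

theorem stmt11_general (n : ℕ)
    (G : SimpleGraph {x : Finset (Fin n) // x.card = 2})
    (hG : ∀ u v, G.Adj u v ↔ Disjoint u.1 v.1)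
    (S : Set {x : Finset (Fin n) // x.card = 2})
    (hcomp : 4 ≤ Nat.card (G.induce Sᶜ).ConnectedComponent) :
    ∀ u v : ↥Sᶜ, ¬ (G.induce Sᶜ).Adj u v :=
  fun _ _ huv => by
    have := card_connectedComponent_induce_le_three hG huv
    omega

theorem stmt11 (n : ℕ) (hn : 5 ≤ n)
    (G : SimpleGraph {x : Finset (Fin n) // x.card = 2})
    (hG : ∀ u v, G.Adj u v ↔ Disjoint u.1 v.1)
    (S : Set {x : Finset (Fin n) // x.card = 2})
    (hcomp : 4 ≤ Nat.card (G.induce Sᶜ).ConnectedComponent) :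
    ∀ u v : ↥Sᶜ, ¬ (G.induce Sᶜ).Adj u v :=
  stmt11_general n G hG S hcomp
end

section
/- Let G be a bipartite graph with parts W (uncoloured vertices) and B (coloured vertices) such that every vertex of W has at least one neighbour in B and every vertex of B has at least one neighbour in W. If for every nonempty S ⊆ W, in the subgraph induced by S ∪ N(S) there exists a vertex b ∈ B adjacent to exactly one vertex of S, then for every nonempty S ⊆ W we have |N(S)| ≥ |S|, and hence (by Hall's theorem) G contains a matching saturating W. -/
open Finset

theorem stmt17 {V : Type*} [Fintype V] [DecidableEq V]
    (G : SimpleGraph V) [DecidableRel G.Adj]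
    (W B : Finset V) (hdisj : Disjoint W B)
    (hbip : ∀ u v, G.Adj u v → ((u ∈ W ∧ v ∈ B) ∨ (u ∈ B ∧ v ∈ W)))
    (hWnbr : ∀ w ∈ W, ∃ b ∈ B, G.Adj w b)
    (hBnbr : ∀ b ∈ B, ∃ w ∈ W, G.Adj b w)
    (hdeg1 : ∀ S ⊆ W, S.Nonempty →
      ∃ b ∈ B.filter (fun b => ∃ w ∈ S, G.Adj w b),
        (S.filter (fun w => G.Adj b w)).card = 1) :
    (∀ S ⊆ W, S.card ≤ (B.filter (fun b => ∃ w ∈ S, G.Adj w b)).card) ∧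
    ∃ f : V → V, Set.InjOn f W ∧ ∀ w ∈ W, f w ∈ B ∧ G.Adj w (f w) := by
  have hall : ∀ S ⊆ W, S.card ≤ (B.filter (fun b => ∃ w ∈ S, G.Adj w b)).card := by
    intro S
    induction S using Finset.strongInduction with
    | _ S ih =>
      intro hSW
      rcases S.eq_empty_or_nonempty with rfl | hne
      · simp
      obtain ⟨b, hb, hcard⟩ := hdeg1 S hSW hne
      simp only [mem_filter] at hb
      obtain ⟨w, hw⟩ := Finset.card_eq_one.mp hcard
      have hwS : w ∈ S := by
        have : w ∈ S.filter (fun w => G.Adj b w) := hw ▸ Finset.mem_singleton_self w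
        exact (mem_filter.mp this).1
      have hss : S.erase w ⊂ S := Finset.erase_ssubset hwS
      have hIH := ih (S.erase w) hss ((erase_subset _ _).trans hSW)
      have hsub : B.filter (fun c => ∃ v ∈ S.erase w, G.Adj v c) ⊆
          (B.filter (fun c => ∃ v ∈ S, G.Adj v c)).erase b := by
        intro c hc
        simp only [mem_filter, mem_erase] at hc ⊢
        obtain ⟨hcB, v, hvS, hadj⟩ := hc
        refine ⟨?_, hcB, v, hvS.2, hadj⟩
        rintro rfl
        have : v ∈ S.filter (fun w => G.Adj c w) := by
          simp [mem_filter, hvS.2, hadj.symm]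
        rw [hw, Finset.mem_singleton] at this
        exact hvS.1 this
      have hbmem : b ∈ B.filter (fun c => ∃ v ∈ S, G.Adj v c) := by
        simp only [mem_filter]; exact ⟨hb.1, hb.2⟩
      calc S.card = (S.erase w).card + 1 := by
            rw [Finset.card_erase_of_mem hwS]
            have := Finset.card_pos.mpr ⟨w, hwS⟩
            omega
        _ ≤ ((B.filter (fun c => ∃ v ∈ S, G.Adj v c)).erase b).card + 1 :=
            by exact Nat.add_le_add_right (hIH.trans (Finset.card_le_card hsub)) 1
        _ = (B.filter (fun c => ∃ v ∈ S, G.Adj v c)).card := by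
            rw [Finset.card_erase_of_mem hbmem]
            have := Finset.card_pos.mpr ⟨b, hbmem⟩
            omega
  refine ⟨hall, ?_⟩
  set t : ↥W → Finset V := fun w => B.filter (fun b => G.Adj w b) with ht
  have hhall : ∀ s : Finset ↥W, s.card ≤ (s.biUnion t).card := by
    intro s
    have h1 : s.card = (s.image Subtype.val).card :=
      (Finset.card_image_of_injective s Subtype.val_injective).symm
    have h2 : s.biUnion t = B.filter (fun b => ∃ w ∈ s.image Subtype.val, G.Adj w b) := by
      ext c
      simp only [mem_biUnion, mem_filter, mem_image, ht]
      constructor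
      · rintro ⟨w, hws, hcB, hadj⟩
        exact ⟨hcB, w, ⟨w, hws, rfl⟩, hadj⟩
      · rintro ⟨hcB, w, ⟨w', hw's, rfl⟩, hadj⟩
        exact ⟨w', hw's, hcB, hadj⟩
    rw [h1, h2]
    apply hall
    intro x hx
    simp only [mem_image] at hx
    obtain ⟨w, _, rfl⟩ := hx
    exact w.2
  obtain ⟨f, hfinj, hf⟩ := (Finset.all_card_le_biUnion_card_iff_exists_injective t).mp hhall
  classical
  refine ⟨fun v => if h : v ∈ W then f ⟨v, h⟩ else v, ?_, ?_⟩
  · intro x hx y hy hxy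
    have hx' : x ∈ W := hx
    have hy' : y ∈ W := hy
    simp only [dif_pos hx', dif_pos hy'] at hxy
    exact congrArg Subtype.val (hfinj hxy)
  · intro w hw
    simp only [dif_pos hw]
    have := hf ⟨w, hw⟩
    simp only [ht, mem_filter] at this
    exact this
end

section
/- Let q₀ ≥ 1 and k₁,...,k_s ≥ 1 with s = q₀. Let M be the (s + Σkᵢ) × (Σkᵢ) block matrix whose top s × (Σkᵢ) block has i-th block-row equal to the all-ones row pattern (𝒥₁ 𝒥₂ ... 𝒥_s) where 𝒥ᵢ is s × kᵢ with the first i−1 rows zero and remaining rows all ones, and whose bottom block is the block-diagonal identity diag(I_{k₁},...,I_{k_s}). Then MᵀM − I has rank exactly s, is positive semidefinite, and consequently the matrix A = −(MMᵀ − I) is symmetric with exactly s negative eigenvalues and nullity k₁ + k₂ + ⋯ + k_s − s. -/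
/-!
Write `M = [T; 1]` with `T` the staircase block, so that `MᵀM - 1 = TᵀT`; this is positive
semidefinite of rank `rank T = s`, since `T` contains a unitriangular `s × s` submatrix
(the first column of each block).

For `A = 1 - MMᵀ`, the fixed spaces of `MMᵀ` and `MᵀM` have the same dimension, because
`v ↦ Mᵀv` maps the first injectively into the second, and symmetrically. Hence
`dim ker A = dim ker TᵀT = Σ kᵢ - s`. A nonzero eigenvalue `μ` of `MMᵀ` with eigenvector `v` is
an eigenvalue of `MᵀM` with eigenvector `Mᵀv`, so `μ ≥ 1` because `MᵀM ≥ 1`; hence every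
eigenvalue of `A` is `≤ 0` or equal to `1`. The eigenvalue `1` has multiplicity
`dim ker MMᵀ = (s + Σ kᵢ) - rank M = s`, and the remaining `s` eigenvalues are negative.
-/

open Matrix Finset Module

namespace Matrix

theorem IsHermitian.card_filter_eigenvalues_eq {𝕜 n : Type*} [RCLike 𝕜] [Fintype n]
    [DecidableEq n] {A : Matrix n n 𝕜} (hA : A.IsHermitian) (μ : ℝ) :
    #{i | hA.eigenvalues i = μ} = finrank 𝕜 (LinearMap.ker (A - (μ : 𝕜) • 1).mulVecLin) := by
  have hker : LinearMap.ker (A - (μ : 𝕜) • 1).mulVecLin = End.eigenspace (toLin' A) μ := by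
    ext v
    simp [sub_eq_zero]
  rw [hker]
  let e : (n → 𝕜) ≃ₗ[𝕜] EuclideanSpace 𝕜 n := (WithLp.linearEquiv 2 𝕜 (n → 𝕜)).symm
  have heig : End.eigenspace (toEuclideanLin A) μ =
      (End.eigenspace (toLin' A) μ).map (e : (n → 𝕜) →ₗ[𝕜] EuclideanSpace 𝕜 n) := by
    ext x
    rw [Submodule.mem_map_equiv, End.mem_eigenspace_iff, End.mem_eigenspace_iff]
    exact (WithLp.ofLp_injective 2).eq_iff.symm
  rw [← LinearEquiv.finrank_map_eq e, ← heig,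
    ← (isSymmetric_toEuclideanLin_iff.mpr hA).card_filter_eigenvalues_eq finrank_euclideanSpace]
  refine Finset.card_equiv (Fintype.equivOfCardEq (Fintype.card_fin _)).symm fun i => ?_
  rw [Finset.mem_filter_univ, Finset.mem_filter_univ]
  simp [eigenvalues, eigenvalues₀]

theorem rank_neg {R m n : Type*} [CommRing R] [Fintype n] (A : Matrix m n R) :
    (-A).rank = A.rank := by
  rw [rank, rank, show (-A).mulVecLin = -A.mulVecLin from LinearMap.ext fun _ => neg_mulVec _ _,
    LinearMap.range_neg]

theorem rank_add_finrank_ker {K m n : Type*} [Field K] [Fintype n] (A : Matrix m n K) :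
    A.rank + finrank K (LinearMap.ker A.mulVecLin) = Fintype.card n := by
  rw [rank, LinearMap.finrank_range_add_finrank_ker, finrank_fintype_fun_eq_card]

section Field

variable {K m n : Type*} [Field K] [Fintype m] [Fintype n] [DecidableEq m] [DecidableEq n]

theorem finrank_ker_one_sub_mul_le (A : Matrix m n K) (B : Matrix n m K) :
    finrank K (LinearMap.ker (1 - A * B).mulVecLin) ≤
      finrank K (LinearMap.ker (1 - B * A).mulVecLin) := by
  have hfixed {v : m → K} (hv : v ∈ LinearMap.ker (1 - A * B).mulVecLin) : A *ᵥ B *ᵥ v = v := by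
    rwa [LinearMap.mem_ker, mulVecLin_apply, sub_mulVec, one_mulVec, sub_eq_zero, ← mulVec_mulVec,
      eq_comm] at hv
  have hmaps : ∀ v ∈ LinearMap.ker (1 - A * B).mulVecLin,
      B.mulVecLin v ∈ LinearMap.ker (1 - B * A).mulVecLin := fun v hv => by
    rw [LinearMap.mem_ker, mulVecLin_apply, mulVecLin_apply, sub_mulVec, one_mulVec,
      ← mulVec_mulVec, hfixed hv, sub_self]
  refine LinearMap.finrank_le_finrank_of_injective (f := B.mulVecLin.restrict hmaps) ?_
  rintro ⟨v, hv⟩ ⟨w, hw⟩ h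
  have hB : B *ᵥ v = B *ᵥ w := congrArg Subtype.val h
  rw [Subtype.mk.injEq, ← hfixed hv, ← hfixed hw, hB]

theorem finrank_ker_one_sub_mul_comm (A : Matrix m n K) (B : Matrix n m K) :
    finrank K (LinearMap.ker (1 - A * B).mulVecLin) =
      finrank K (LinearMap.ker (1 - B * A).mulVecLin) :=
  (finrank_ker_one_sub_mul_le A B).antisymm (finrank_ker_one_sub_mul_le B A)

theorem finrank_ker_one_sub_mul (A : Matrix m n K) (B : Matrix n m K) :
    finrank K (LinearMap.ker (1 - A * B).mulVecLin) = Fintype.card n - (B * A - 1).rank := by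
  have h := rank_add_finrank_ker (1 - B * A)
  rw [← rank_neg, neg_sub] at h
  rw [finrank_ker_one_sub_mul_comm]
  omega

end Field

section Real

variable {m n : Type*} [Fintype m] [Fintype n] [DecidableEq n] {M : Matrix m n ℝ}

theorem eq_zero_or_one_le_of_mul_transpose_mulVec_eq_smul (hM : (Mᵀ * M - 1).PosSemidef)
    {v : m → ℝ} {μ : ℝ} (hv : v ≠ 0) (h : (M * Mᵀ) *ᵥ v = μ • v) : μ = 0 ∨ 1 ≤ μ := by
  refine or_iff_not_imp_left.mpr fun hμ => ?_
  set w := Mᵀ *ᵥ v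
  have hMw : M *ᵥ w = μ • v := by rw [mulVec_mulVec, h]
  have hw : w ≠ 0 := fun h0 => by
    rw [h0, mulVec_zero, eq_comm, smul_eq_zero] at hMw
    exact hMw.elim hμ hv
  have hMtMw : (Mᵀ * M) *ᵥ w = μ • w := by rw [← mulVec_mulVec, hMw, mulVec_smul]
  have hquad : 0 ≤ (μ - 1) * (w ⬝ᵥ w) := by
    simpa [sub_mulVec, hMtMw, dotProduct_sub, dotProduct_smul, sub_mul] using
      hM.dotProduct_mulVec_nonneg w
  have hww : 0 < w ⬝ᵥ w := by simpa using dotProduct_star_self_pos_iff.mpr hw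
  linarith [nonneg_of_mul_nonneg_left hquad hww]

theorem eigenvalues_one_sub_mul_transpose_le_zero_or_eq_one [DecidableEq m]
    (hM : (Mᵀ * M - 1).PosSemidef) (hA : (1 - M * Mᵀ).IsHermitian) (i : m) :
    hA.eigenvalues i ≤ 0 ∨ hA.eigenvalues i = 1 := by
  have hv : ⇑(hA.eigenvectorBasis i) ≠ 0 :=
    (WithLp.ofLp_eq_zero 2).ne.mpr (hA.eigenvectorBasis.orthonormal.ne_zero i)
  have h : (M * Mᵀ) *ᵥ ⇑(hA.eigenvectorBasis i) =
      (1 - hA.eigenvalues i) • ⇑(hA.eigenvectorBasis i) := by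
    have := hA.mulVec_eigenvectorBasis i
    rw [sub_mulVec, one_mulVec] at this
    rw [sub_smul, one_smul, ← this]
    abel
  rcases eq_zero_or_one_le_of_mul_transpose_mulVec_eq_smul hM hv h with h | h
  · right; linarith
  · left; linarith

theorem rank_eq_card_width_of_posSemidef (hM : (Mᵀ * M - 1).PosSemidef) :
    M.rank = Fintype.card n := by
  have hpos : (Mᵀ * M).PosDef := by simpa using PosDef.one.add_posSemidef hM
  rw [← rank_transpose_mul_self, rank_of_isUnit _ hpos.isUnit]

theorem card_filter_eigenvalues_one_sub_mul_transpose_neg [DecidableEq m]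
    (hM : (Mᵀ * M - 1).PosSemidef) (hA : (1 - M * Mᵀ).IsHermitian) :
    #{i | hA.eigenvalues i < 0} = (Mᵀ * M - 1).rank := by
  have hzero : #{i | hA.eigenvalues i = 0} = Fintype.card n - (Mᵀ * M - 1).rank := by
    rw [hA.card_filter_eigenvalues_eq, RCLike.ofReal_zero, zero_smul, sub_zero,
      finrank_ker_one_sub_mul]
  have hone : #{i | hA.eigenvalues i = 1} = finrank ℝ (LinearMap.ker (M * Mᵀ).mulVecLin) := by
    rw [hA.card_filter_eigenvalues_eq, RCLike.ofReal_one, one_smul, sub_sub_cancel_left,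
      ← toLin'_apply', map_neg, LinearMap.ker_neg, toLin'_apply']
  have hsplit : #{i | hA.eigenvalues i < 0} +
      (#{i | hA.eigenvalues i = 0} + #{i | hA.eigenvalues i = 1}) = Fintype.card m := by
    have hdisj : Disjoint (α := Finset m) {i | hA.eigenvalues i = 0} {i | hA.eigenvalues i = 1} :=
      disjoint_filter.mpr fun i _ h0 h1 => by linarith
    rw [← card_union_of_disjoint hdisj, ← filter_or, ← card_univ,
      ← card_filter_add_card_filter_not (s := univ) (p := fun i => hA.eigenvalues i < 0)]
    congr 1
    refine congrArg card (filter_congr fun i _ => ?_)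
    have := eigenvalues_one_sub_mul_transpose_le_zero_or_eq_one hM hA i
    grind
  have hrank := rank_add_finrank_ker (M * Mᵀ)
  rw [rank_self_mul_transpose, rank_eq_card_width_of_posSemidef hM] at hrank
  have hle : (Mᵀ * M - 1).rank ≤ Fintype.card n := rank_le_card_width _
  omega

end Real

end Matrix

noncomputable def staircase {s : ℕ} (k : Fin s → ℕ) : Matrix (Fin s) (Σ i : Fin s, Fin (k i)) ℝ :=
  of fun r c => if c.1 ≤ r then 1 else 0

theorem rank_staircase {s : ℕ} {k : Fin s → ℕ} (hk : ∀ i, 1 ≤ k i) : (staircase k).rank = s := by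
  let L : Matrix (Fin s) (Fin s) ℝ := (staircase k).submatrix id fun i => ⟨i, ⟨0, hk i⟩⟩
  have hlower : L.IsLowerTriangular := fun i j (hij : i < j) => by
    simp [L, staircase, hij.not_ge]
  have hL : L.det = 1 := by
    rw [det_of_isLowerTriangular L hlower]
    simp [L, staircase]
  refine le_antisymm ((rank_le_card_height _).trans_eq (Fintype.card_fin s)) ?_
  calc s = L.rank := by
        rw [rank_of_isUnit L (by simp [isUnit_iff_isUnit_det, hL]), Fintype.card_fin]
    _ ≤ (staircase k).rank := rank_submatrix_le _ _ _

theorem stmt19_general (s : ℕ) (k : Fin s → ℕ) (hk : ∀ i, 1 ≤ k i)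
    (M : Matrix (Fin s ⊕ (Σ i : Fin s, Fin (k i))) (Σ i : Fin s, Fin (k i)) ℝ)
    (hMtop : ∀ (r : Fin s) (c : Σ i : Fin s, Fin (k i)),
      M (Sum.inl r) c = if (c.1 : ℕ) ≤ (r : ℕ) then 1 else 0)
    (hMbot : ∀ (x c : Σ i : Fin s, Fin (k i)),
      M (Sum.inr x) c = if x = c then 1 else 0) :
    (Mᵀ * M - 1).rank = s ∧
    (Mᵀ * M - 1).PosSemidef ∧
    ∃ hA : (-(M * Mᵀ - 1)).IsHermitian,
      (Finset.univ.filter (fun i => hA.eigenvalues i < 0)).card = s ∧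
      Module.finrank ℝ (LinearMap.ker (-(M * Mᵀ - 1)).mulVecLin) =
        (∑ i, k i) - s := by
  have hM : M = fromRows (staircase k) 1 := by
    refine Matrix.ext fun i c => ?_
    rcases i with r | x
    · rw [hMtop, fromRows_apply_inl]
      rfl
    · rw [hMbot, fromRows_apply_inr, one_apply]
  have hgram : Mᵀ * M - 1 = (staircase k)ᵀ * staircase k := by
    rw [hM, transpose_fromRows, fromCols_mul_fromRows, transpose_one, one_mul,
      add_sub_cancel_right]
  have hrank : (Mᵀ * M - 1).rank = s := by
    rw [hgram, rank_transpose_mul_self, rank_staircase hk]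
  have hpsd : (Mᵀ * M - 1).PosSemidef := by
    simpa [hgram, conjTranspose_eq_transpose_of_trivial] using
      posSemidef_conjTranspose_mul_self (staircase k)
  have hA : (1 - M * Mᵀ).IsHermitian :=
    isHermitian_one.sub (by simpa using isHermitian_mul_conjTranspose_self M)
  rw [neg_sub]
  refine ⟨hrank, hpsd, hA, ?_, ?_⟩
  · rw [card_filter_eigenvalues_one_sub_mul_transpose_neg hpsd, hrank]
  · rw [finrank_ker_one_sub_mul, hrank]
    simp

theorem stmt19 (s : ℕ) (hs : 1 ≤ s) (k : Fin s → ℕ) (hk : ∀ i, 1 ≤ k i)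
    (M : Matrix (Fin s ⊕ (Σ i : Fin s, Fin (k i))) (Σ i : Fin s, Fin (k i)) ℝ)
    (hMtop : ∀ (r : Fin s) (c : Σ i : Fin s, Fin (k i)),
      M (Sum.inl r) c = if (c.1 : ℕ) ≤ (r : ℕ) then 1 else 0)
    (hMbot : ∀ (x c : Σ i : Fin s, Fin (k i)),
      M (Sum.inr x) c = if x = c then 1 else 0) :
    (Mᵀ * M - 1).rank = s ∧
    (Mᵀ * M - 1).PosSemidef ∧
    ∃ hA : (-(M * Mᵀ - 1)).IsHermitian,
      (Finset.univ.filter (fun i => hA.eigenvalues i < 0)).card = s ∧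
      Module.finrank ℝ (LinearMap.ker (-(M * Mᵀ - 1)).mulVecLin) =
        (∑ i, k i) - s :=
  stmt19_general s k hk M hMtop hMbot
end
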